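/- arXiv:2503.08021 — 3 statements merged into one kernel-verified Lean document; each statement's English description precedes it below -/
import Mathlib

section
/- Let A and H be cocommutative Hopf algebras over a field k such that A is an H-bimodule Hopf algebra, let B be a Rota-Baxter operator on H, and let R : A → A be a linear map satisfying R(g₁B(g₂) ▷ b ◁ S_H(B(g₃))) = R(b) ◁ S_H(B(g)) for all b ∈ A and g ∈ H. Then for all a ∈ A and g ∈ H: (i) R(g₁B(g₂) ▷ a) ◁ B(g₃) = R(a ◁ B(g)), and (ii) R(a) ◁ B(g) = R(S_H(g₁B(g₂)) ▷ a ◁ B(g₃)). -/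
open TensorProduct

noncomputable section

variable {k : Type} [Field k]

/-- The iterated comultiplication `x ↦ x₁ ⊗ (x₂ ⊗ x₃)` associated to a comultiplication `Δ`. -/
def comul3 {V : Type} [AddCommMonoid V] [Module k V] (Δ : V →ₗ[k] V ⊗[k] V) :
    V →ₗ[k] V ⊗[k] (V ⊗[k] V) :=
  LinearMap.lTensor V Δ ∘ₗ Δ

/-- `B` is a Rota–Baxter operator on a (cocommutative) Hopf-algebra-like structure with
comultiplication `Δ`, counit `ε`, multiplication `mul` and antipode `S`:  `B` is a coalgebra
map and `B(x)B(y) = B(x₁ B(x₂) y S(B(x₃)))` for all `x, y`.  The Sweedler expression is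
stated via an arbitrary finite representation of the iterated comultiplication of `x`. -/
def IsRotaBaxterOp {V : Type} [AddCommMonoid V] [Module k V]
    (Δ : V →ₗ[k] V ⊗[k] V) (ε : V →ₗ[k] k)
    (mul : V →ₗ[k] V →ₗ[k] V) (S : V →ₗ[k] V) (B : V →ₗ[k] V) : Prop :=
  Δ ∘ₗ B = TensorProduct.map B B ∘ₗ Δ ∧
  ε ∘ₗ B = ε ∧
  ∀ (x y : V) (ι : Type) (s : Finset ι) (x1 x2 x3 : ι → V),
    comul3 Δ x = ∑ i ∈ s, x1 i ⊗ₜ[k] (x2 i ⊗ₜ[k] x3 i) →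
    mul (B x) (B y) = B (∑ i ∈ s, mul (mul (mul (x1 i) (B (x2 i))) y) (S (x3 i)))

/-- The data of an `H`-bimodule Hopf algebra structure on `A`, relative to prescribed
comultiplications `ΔA, ΔH`, counits `εA, εH` and antipode `SA`:  bilinear left and right
actions making `A` an `H`-bimodule algebra, an `H`-bimodule coalgebra, and whose antipode
is `H`-bilinear. -/
structure BimoduleHopfData (k : Type) [Field k] (A H : Type) [Ring A] [Ring H]
    [Algebra k A] [Algebra k H]
    (ΔA : A →ₗ[k] A ⊗[k] A) (εA : A →ₗ[k] k) (SA : A →ₗ[k] A)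
    (ΔH : H →ₗ[k] H ⊗[k] H) (εH : H →ₗ[k] k) where
  lact : H →ₗ[k] A →ₗ[k] A
  ract : A →ₗ[k] H →ₗ[k] A
  one_lact : ∀ a : A, lact 1 a = a
  mul_lact : ∀ (g h : H) (a : A), lact (g * h) a = lact g (lact h a)
  ract_one : ∀ a : A, ract a 1 = a
  ract_mul : ∀ (a : A) (g h : H), ract a (g * h) = ract (ract a g) h
  lact_ract : ∀ (g : H) (a : A) (h : H), lact g (ract a h) = ract (lact g a) h
  lact_mulA : ∀ (h : H) (a b : A) (ι : Type) (s : Finset ι) (h1 h2 : ι → H),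
    ΔH h = ∑ i ∈ s, h1 i ⊗ₜ[k] h2 i →
    lact h (a * b) = ∑ i ∈ s, lact (h1 i) a * lact (h2 i) b
  lact_oneA : ∀ h : H, lact h (1 : A) = εH h • (1 : A)
  mulA_ract : ∀ (a b : A) (h : H) (ι : Type) (s : Finset ι) (h1 h2 : ι → H),
    ΔH h = ∑ i ∈ s, h1 i ⊗ₜ[k] h2 i →
    ract (a * b) h = ∑ i ∈ s, ract a (h1 i) * ract b (h2 i)
  oneA_ract : ∀ h : H, ract (1 : A) h = εH h • (1 : A)
  comul_lact : ∀ (h : H) (a : A) (ι κ : Type) (s : Finset ι) (t : Finset κ)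
      (h1 h2 : ι → H) (a1 a2 : κ → A),
    ΔH h = ∑ i ∈ s, h1 i ⊗ₜ[k] h2 i →
    ΔA a = ∑ j ∈ t, a1 j ⊗ₜ[k] a2 j →
    ΔA (lact h a) = ∑ i ∈ s, ∑ j ∈ t, lact (h1 i) (a1 j) ⊗ₜ[k] lact (h2 i) (a2 j)
  comul_ract : ∀ (a : A) (h : H) (ι κ : Type) (s : Finset ι) (t : Finset κ)
      (a1 a2 : ι → A) (h1 h2 : κ → H),
    ΔA a = ∑ i ∈ s, a1 i ⊗ₜ[k] a2 i →
    ΔH h = ∑ j ∈ t, h1 j ⊗ₜ[k] h2 j →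
    ΔA (ract a h) = ∑ i ∈ s, ∑ j ∈ t, ract (a1 i) (h1 j) ⊗ₜ[k] ract (a2 i) (h2 j)
  counit_lact : ∀ (h : H) (a : A), εA (lact h a) = εH h * εA a
  counit_ract : ∀ (a : A) (h : H), εA (ract a h) = εA a * εH h
  antipode_lact : ∀ (h : H) (a : A), lact h (SA a) = SA (lact h a)
  antipode_ract : ∀ (a : A) (h : H), ract (SA a) h = SA (ract a h)

variable {A H : Type} [Ring A] [Ring H] [Algebra k A] [Algebra k H]
  {ΔA : A →ₗ[k] A ⊗[k] A} {εA : A →ₗ[k] k} {SA : A →ₗ[k] A}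
  {ΔH : H →ₗ[k] H ⊗[k] H} {εH : H →ₗ[k] k}

/-- `m` is the multiplication of the L-R smash product `A ⋈ H`:
`(a ⋈ h)(b ⋈ g) = (a ◁ g₂)(h₁ ▷ b) ⋈ h₂g₁`. -/
def IsSmashMul (D : BimoduleHopfData k A H ΔA εA SA ΔH εH)
    (m : (A ⊗[k] H) →ₗ[k] (A ⊗[k] H) →ₗ[k] A ⊗[k] H) : Prop :=
  ∀ (a b : A) (h g : H) (ι κ : Type) (s : Finset ι) (t : Finset κ)
    (h1 h2 : ι → H) (g1 g2 : κ → H),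
    ΔH h = ∑ i ∈ s, h1 i ⊗ₜ[k] h2 i →
    ΔH g = ∑ j ∈ t, g1 j ⊗ₜ[k] g2 j →
    m (a ⊗ₜ[k] h) (b ⊗ₜ[k] g) =
      ∑ i ∈ s, ∑ j ∈ t, (D.ract a (g2 j) * D.lact (h1 i) b) ⊗ₜ[k] (h2 i * g1 j)

/-- `v` is the antipode of the L-R smash product `A ⋈ H`:
`S(a ⋈ h) = S_H(h₃) ▷ S_A(a) ◁ S_H(h₂) ⋈ S_H(h₁)`. -/
def IsSmashAntipode (D : BimoduleHopfData k A H ΔA εA SA ΔH εH) (SH : H →ₗ[k] H)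
    (v : A ⊗[k] H →ₗ[k] A ⊗[k] H) : Prop :=
  ∀ (a : A) (h : H) (ι : Type) (s : Finset ι) (h1 h2 h3 : ι → H),
    comul3 ΔH h = ∑ i ∈ s, h1 i ⊗ₜ[k] (h2 i ⊗ₜ[k] h3 i) →
    v (a ⊗ₜ[k] h) =
      ∑ i ∈ s, D.ract (D.lact (SH (h3 i)) (SA a)) (SH (h2 i)) ⊗ₜ[k] SH (h1 i)

/-- `Bb` is the map `B̄(a ⋈ h) = B(h₁) ▷ R(a) ◁ B(h₂) ⋈ B(h₃)` on `A ⋈ H`. -/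
def IsBbar (D : BimoduleHopfData k A H ΔA εA SA ΔH εH) (R : A →ₗ[k] A) (B : H →ₗ[k] H)
    (Bb : A ⊗[k] H →ₗ[k] A ⊗[k] H) : Prop :=
  ∀ (a : A) (h : H) (ι : Type) (s : Finset ι) (h1 h2 h3 : ι → H),
    comul3 ΔH h = ∑ i ∈ s, h1 i ⊗ₜ[k] (h2 i ⊗ₜ[k] h3 i) →
    Bb (a ⊗ₜ[k] h) =
      ∑ i ∈ s, D.ract (D.lact (B (h1 i)) (R a)) (B (h2 i)) ⊗ₜ[k] B (h3 i)

/-- The comultiplication of the L-R smash product: `Δ(a ⋈ h) = (a₁ ⋈ h₁) ⊗ (a₂ ⋈ h₂)`. -/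
def smashComul (ΔA : A →ₗ[k] A ⊗[k] A) (ΔH : H →ₗ[k] H ⊗[k] H) :
    A ⊗[k] H →ₗ[k] (A ⊗[k] H) ⊗[k] (A ⊗[k] H) :=
  (TensorProduct.tensorTensorTensorComm k A A H H).toLinearMap ∘ₗ TensorProduct.map ΔA ΔH

/-- The counit of the L-R smash product: `ε(a ⋈ h) = ε(a)ε(h)`. -/
def smashCounit (εA : A →ₗ[k] k) (εH : H →ₗ[k] k) : A ⊗[k] H →ₗ[k] k :=
  (TensorProduct.lid k k).toLinearMap ∘ₗ TensorProduct.map εA εH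

end

/-!
In the convolution algebra `Hom(H, End A)` put `P(g) = g₁B(g₂) ▷ -`, `Q(g) = - ◁ B(g)` and let
`r(g) = ε(g) R`, so that convolving with `r` on the left or right is composing with `R`.
Because `H` is cocommutative, `B` and `g ↦ g₁B(g₂)` are coalgebra maps, so composing them with
the antipode gives convolution inverses: `P'(g) = S(g₁B(g₂)) ▷ -` is a right inverse of `P`, and,
the right action being an antihomomorphism (harmless by cocommutativity),
`Q'(g) = - ◁ S(B(g))` is a two-sided inverse of `Q`.
The hypothesis on `R` says `r(PQ') = Q'r`, i.e. `rP = Q'rQ`; hence `Q(rP) = rQ`, which is (i),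
and multiplying by `P'` on the right gives `r(QP') = Qr`, which is (ii).
-/

open Coalgebra WithConv LinearMap

section Convolution

variable {k C E E' : Type} [Field k] [AddCommMonoid C] [Module k C] [Coalgebra k C]
  [Semiring E] [Algebra k E] [Semiring E'] [Algebra k E']

theorem exists_comul3_eq (c : C) : ∃ (ι : Type) (s : Finset ι) (x₁ x₂ x₃ : ι → C),
    comul3 comul c = ∑ i ∈ s, x₁ i ⊗ₜ[k] (x₂ i ⊗ₜ[k] x₃ i) := by
  let rep (i : C × C) := ℛ k ((ℛ k c).right i)
  refine ⟨(_ : C × C) × (C × C), (ℛ k c).index.sigma fun i => (rep i).index,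
    fun i => (ℛ k c).left i.1, fun i => (rep i.1).left i.2, fun i => (rep i.1).right i.2, ?_⟩
  rw [Finset.sum_sigma, comul3, comp_apply, ← (ℛ k c).eq, map_sum]
  refine Finset.sum_congr rfl fun i _ => ?_
  rw [lTensor_tmul, ← (rep i).eq, tmul_sum]

theorem comul3_eq_sum_rotate [IsCocomm k C] {c : C} {ι : Type} {s : Finset ι}
    {x₁ x₂ x₃ : ι → C} (hc : comul3 comul c = ∑ i ∈ s, x₁ i ⊗ₜ[k] (x₂ i ⊗ₜ[k] x₃ i)) :
    comul3 comul c = ∑ i ∈ s, x₃ i ⊗ₜ[k] (x₁ i ⊗ₜ[k] x₂ i) := by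
  have key : TensorProduct.comm k (C ⊗[k] C) C
      ((TensorProduct.assoc k C C C).symm (comul3 comul c)) = comul3 comul c := by
    rw [comul3, comp_apply, coassoc_symm_apply, ← lTensor_comm, comm_comul]
  rw [← key, hc]
  simp

theorem convMul_toConv_comp_comul_apply (f : WithConv (C →ₗ[k] E)) (Y : C ⊗[k] C →ₗ[k] E)
    {c : C} {ι : Type} {s : Finset ι} {x₁ x₂ x₃ : ι → C}
    (hc : comul3 comul c = ∑ i ∈ s, x₁ i ⊗ₜ[k] (x₂ i ⊗ₜ[k] x₃ i)) :
    (f * toConv (Y ∘ₗ comul)) c = ∑ i ∈ s, f (x₁ i) * Y (x₂ i ⊗ₜ x₃ i) := by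
  have : (f * toConv (Y ∘ₗ comul)) c = mul' k E (map f.ofConv Y (comul3 comul c)) := by
    rw [convMul_apply, ofConv_toConv, ← map_comp_lTensor]; rfl
  simp [this, hc]

variable (k) in
def constConv (x : E) : WithConv (C →ₗ[k] E) := toConv (toSpanSingleton k E x ∘ₗ counit)

theorem constConv_mul (x : E) (f : WithConv (C →ₗ[k] E)) :
    constConv k x * f = toConv (mulLeft k x ∘ₗ f.ofConv) := by
  ext c
  rw [convMul_apply, constConv, ofConv_toConv, ← map_comp_rTensor, comp_apply,
    rTensor_counit_comul]
  simp

theorem mul_constConv (x : E) (f : WithConv (C →ₗ[k] E)) :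
    f * constConv k x = toConv (mulRight k x ∘ₗ f.ofConv) := by
  ext c
  rw [convMul_apply, constConv, ofConv_toConv, ← map_comp_lTensor, comp_apply,
    lTensor_counit_comul]
  simp

theorem toConv_algHom_comp_mul_eq_one (φ : E' →ₐ[k] E) {f g : WithConv (C →ₗ[k] E')}
    (h : f * g = 1) :
    toConv (φ.toLinearMap ∘ₗ f.ofConv) * toConv (φ.toLinearMap ∘ₗ g.ofConv) = 1 := by
  apply WithConv.ext
  rw [← algHom_comp_convMul_distrib, h]
  ext c
  simp

theorem toConv_comp_convMul_of_map_mul_rev [IsCocomm k C]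
    (ρ : E' →ₗ[k] E) (hρ : ∀ x y, ρ (x * y) = ρ y * ρ x) (f g : WithConv (C →ₗ[k] E')) :
    toConv (ρ ∘ₗ (f * g).ofConv) = toConv (ρ ∘ₗ g.ofConv) * toConv (ρ ∘ₗ f.ofConv) := by
  ext c
  simp only [comp_apply, convMul_apply]
  conv_lhs => rw [← comm_comul k c]
  induction comul (R := k) c using TensorProduct.induction_on with
  | zero => simp
  | tmul x y => simp [hρ]
  | add x y hx hy => simp_all

theorem toConv_comp_mul_eq_one_of_map_mul_rev [IsCocomm k C] (ρ : E' →ₗ[k] E) (hρ1 : ρ 1 = 1)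
    (hρ : ∀ x y, ρ (x * y) = ρ y * ρ x) {f g : WithConv (C →ₗ[k] E')} (h : f * g = 1) :
    toConv (ρ ∘ₗ g.ofConv) * toConv (ρ ∘ₗ f.ofConv) = 1 := by
  rw [← toConv_comp_convMul_of_map_mul_rev ρ hρ, h]
  ext c
  simp [Algebra.algebraMap_eq_smul_one, hρ1]

end Convolution

section CoalgHom

variable {k C H : Type} [Field k] [AddCommMonoid C] [Module k C] [Coalgebra k C] [Semiring H]

theorem CoalgHom.toConv_mul_toConv_antipode_comp [HopfAlgebra k H] (F : C →ₗc[k] H) :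
    toConv (F : C →ₗ[k] H) * toConv (HopfAlgebra.antipode k ∘ₗ (F : C →ₗ[k] H)) = 1 := by
  have := convMul_comp_coalgHom_distrib (toConv id) (toConv (HopfAlgebra.antipode k)) F
  rw [id_mul_antipode] at this
  ext c
  simpa using (congr($this c)).symm

theorem CoalgHom.toConv_antipode_comp_mul_toConv [HopfAlgebra k H] (F : C →ₗc[k] H) :
    toConv (HopfAlgebra.antipode k ∘ₗ (F : C →ₗ[k] H)) * toConv (F : C →ₗ[k] H) = 1 := by
  have := convMul_comp_coalgHom_distrib (toConv (HopfAlgebra.antipode k)) (toConv id) F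
  rw [antipode_mul_id] at this
  ext c
  simpa using (congr($this c)).symm

noncomputable def CoalgHom.convMul [IsCocomm k C] [Bialgebra k H] (f g : C →ₗc[k] H) :
    C →ₗc[k] H where
  toLinearMap := (toConv f.toLinearMap * toConv g.toLinearMap).ofConv
  counit_comp := by
    have hone : toConv (counit : C →ₗ[k] k) = 1 := by ext; simp
    rw [← Bialgebra.toLinearMap_counitAlgHom, algHom_comp_convMul_distrib,
      Bialgebra.toLinearMap_counitAlgHom, ofConv_toConv, ofConv_toConv, f.counit_comp,
      g.counit_comp, hone, one_mul]
    rfl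
  map_comp_comul := calc
    _ = (toConv (map f.toLinearMap f.toLinearMap) *
          toConv (map g.toLinearMap g.toLinearMap)).ofConv ∘ₗ (comulCoalgHom k C).toLinearMap := by
      rw [map_convMul_map (f := toConv f.toLinearMap) (g := toConv f.toLinearMap)
        (h := toConv g.toLinearMap) (k := toConv g.toLinearMap)]
      rfl
    _ = (toConv (comul ∘ₗ f.toLinearMap) * toConv (comul ∘ₗ g.toLinearMap)).ofConv := by
      rw [convMul_comp_coalgHom_distrib, ← f.map_comp_comul, ← g.map_comp_comul]
      rfl
    _ = _ := by
      rw [← Bialgebra.toLinearMap_comulAlgHom, algHom_comp_convMul_distrib]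

end CoalgHom

section Monoid

variable {M : Type*} [Monoid M]

theorem mul_mul_eq_of_mul_mul_inv_eq {p q q' r : M} (hqq' : q * q' = 1)
    (hq'q : q' * q = 1) (hr : r * (p * q') = q' * r) : q * (r * p) = r * q := calc
  q * (r * p) = q * (r * (p * q') * q) := by rw [mul_assoc r, mul_assoc p, hq'q, mul_one]
  _ = q * q' * (r * q) := by rw [hr]; simp only [mul_assoc]
  _ = r * q := by rw [hqq', one_mul]

theorem mul_mul_inv_eq_of_mul_mul_eq {p p' q r : M} (hpp' : p * p' = 1)
    (h : q * (r * p) = r * q) : r * (q * p') = q * r := calc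
  r * (q * p') = q * (r * p) * p' := by rw [h, mul_assoc]
  _ = q * r := by rw [mul_assoc, mul_assoc, hpp', mul_one]

end Monoid

namespace BimoduleHopfData

variable {k A H C : Type} [Field k] [Ring A] [Algebra k A] [AddCommMonoid C] [Module k C]
  {ΔA : A →ₗ[k] A ⊗[k] A} {εA : A →ₗ[k] k} {SA : A →ₗ[k] A}

section Algebra

variable [Ring H] [Algebra k H] {ΔH : H →ₗ[k] H ⊗[k] H} {εH : H →ₗ[k] k}
  (D : BimoduleHopfData k A H ΔA εA SA ΔH εH)

noncomputable def lactAlgHom : H →ₐ[k] Module.End k A :=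
  AlgHom.ofLinearMap D.lact (LinearMap.ext D.one_lact) fun g h => LinearMap.ext (D.mul_lact g h)

theorem ract_flip_one : D.ract.flip 1 = 1 := LinearMap.ext D.ract_one

theorem ract_flip_mul (g h : H) : D.ract.flip (g * h) = D.ract.flip h * D.ract.flip g :=
  LinearMap.ext fun a => D.ract_mul a g h

noncomputable def lactConv (F : C →ₗ[k] H) : WithConv (C →ₗ[k] Module.End k A) :=
  toConv (D.lact ∘ₗ F)

noncomputable def ractConv (F : C →ₗ[k] H) : WithConv (C →ₗ[k] Module.End k A) :=
  toConv (D.ract.flip ∘ₗ F)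

end Algebra

variable [Ring H] [HopfAlgebra k H] {ΔH : H →ₗ[k] H ⊗[k] H} {εH : H →ₗ[k] k}
  (D : BimoduleHopfData k A H ΔA εA SA ΔH εH)
  (B : H →ₗ[k] H) {g : H} {ι : Type} {s : Finset ι} {g₁ g₂ g₃ : ι → H}

theorem lactConv_idMul_mul_ractConv_apply (F : H →ₗ[k] H)
    (hg : comul3 comul g = ∑ i ∈ s, g₁ i ⊗ₜ[k] (g₂ i ⊗ₜ[k] g₃ i)) (b : A) :
    (D.lactConv (toConv LinearMap.id * toConv B).ofConv * D.ractConv F) g b =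
      ∑ i ∈ s, D.ract (D.lact (g₁ i * B (g₂ i)) b) (F (g₃ i)) := by
  have hsplit : D.lactConv (toConv LinearMap.id * toConv B).ofConv =
      D.lactConv LinearMap.id * D.lactConv B :=
    WithConv.ext (algHom_comp_convMul_distrib D.lactAlgHom _ _)
  rw [hsplit, mul_assoc, convMul_def (D.lactConv B), ← comp_assoc,
    convMul_toConv_comp_comul_apply _ _ hg]
  simp [lactConv, ractConv, D.mul_lact, D.lact_ract]

theorem ractConv_mul_constConv_mul_lactConv_idMul_apply [IsCocomm k H] (R : Module.End k A)
    (hg : comul3 comul g = ∑ i ∈ s, g₁ i ⊗ₜ[k] (g₂ i ⊗ₜ[k] g₃ i)) (a : A) :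
    (D.ractConv B * ((constConv k R : WithConv (H →ₗ[k] Module.End k A)) *
        D.lactConv (toConv LinearMap.id * toConv B).ofConv)) g a =
      ∑ i ∈ s, D.ract (R (D.lact (g₁ i * B (g₂ i)) a)) (B (g₃ i)) := by
  have := convMul_toConv_comp_comul_apply (D.ractConv B)
    (mulLeft k R ∘ₗ D.lact ∘ₗ mul' k H ∘ₗ map LinearMap.id B) (comul3_eq_sum_rotate hg)
  rw [constConv_mul]
  exact congr($this a).trans (by simp [ractConv])

theorem constConv_mul_ractConv_mul_lactConv_antipode_idMul_apply [IsCocomm k H]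
    (R : Module.End k A) (hg : comul3 comul g = ∑ i ∈ s, g₁ i ⊗ₜ[k] (g₂ i ⊗ₜ[k] g₃ i)) (a : A) :
    ((constConv k R : WithConv (H →ₗ[k] Module.End k A)) * (D.ractConv B *
        D.lactConv (HopfAlgebra.antipode k ∘ₗ (toConv LinearMap.id * toConv B).ofConv))) g a =
      R (∑ i ∈ s, D.ract (D.lact (HopfAlgebra.antipode k (g₁ i * B (g₂ i))) a) (B (g₃ i))) := by
  have := convMul_toConv_comp_comul_apply (D.ractConv B)
    (D.lact ∘ₗ HopfAlgebra.antipode k ∘ₗ mul' k H ∘ₗ map LinearMap.id B) (comul3_eq_sum_rotate hg)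
  rw [constConv_mul]
  simp only [comp_apply, mulLeft_apply, Module.End.mul_apply]
  exact congr(R ($this a)).trans (by simp [ractConv])

end BimoduleHopfData

theorem rotaBaxter_smash_aux_general
    {k A H : Type} [Field k] [Ring A] [Ring H] [HopfAlgebra k A] [HopfAlgebra k H]
    (hcH : ∀ h : H, TensorProduct.comm k H H (Coalgebra.comul (R := k) h) = Coalgebra.comul h)
    (D : BimoduleHopfData k A H Coalgebra.comul Coalgebra.counit (HopfAlgebra.antipode k)
      Coalgebra.comul Coalgebra.counit)
    (B : H →ₗ[k] H)
    (hB : IsRotaBaxterOp Coalgebra.comul Coalgebra.counit (LinearMap.mul k H)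
      (HopfAlgebra.antipode (R := k)) B)
    (R : A →ₗ[k] A)
    (hR : ∀ (b : A) (g : H) (ι : Type) (s : Finset ι) (g1 g2 g3 : ι → H),
      comul3 Coalgebra.comul g = ∑ i ∈ s, g1 i ⊗ₜ[k] (g2 i ⊗ₜ[k] g3 i) →
      R (∑ i ∈ s,
          D.ract (D.lact (g1 i * B (g2 i)) b) (HopfAlgebra.antipode (R := k) (B (g3 i)))) =
        D.ract (R b) (HopfAlgebra.antipode (R := k) (B g))) :
    (∀ (a : A) (g : H) (ι : Type) (s : Finset ι) (g1 g2 g3 : ι → H),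
      comul3 Coalgebra.comul g = ∑ i ∈ s, g1 i ⊗ₜ[k] (g2 i ⊗ₜ[k] g3 i) →
      ∑ i ∈ s, D.ract (R (D.lact (g1 i * B (g2 i)) a)) (B (g3 i)) = R (D.ract a (B g))) ∧
    (∀ (a : A) (g : H) (ι : Type) (s : Finset ι) (g1 g2 g3 : ι → H),
      comul3 Coalgebra.comul g = ∑ i ∈ s, g1 i ⊗ₜ[k] (g2 i ⊗ₜ[k] g3 i) →
      D.ract (R a) (B g) =
        R (∑ i ∈ s,
            D.ract (D.lact (HopfAlgebra.antipode (R := k) (g1 i * B (g2 i))) a) (B (g3 i)))) := by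
  have : IsCocomm k H := ⟨LinearMap.ext hcH⟩
  let Bc : H →ₗc[k] H := ⟨B, hB.2.1, hB.1.symm⟩
  set P := D.lactConv (toConv LinearMap.id * toConv B).ofConv
  set P' := D.lactConv (HopfAlgebra.antipode k ∘ₗ (toConv LinearMap.id * toConv B).ofConv)
  set Q := D.ractConv B
  set Q' := D.ractConv (HopfAlgebra.antipode k ∘ₗ B)
  set r : WithConv (H →ₗ[k] Module.End k A) := constConv k R
  have hPP' : P * P' = 1 := toConv_algHom_comp_mul_eq_one D.lactAlgHom
    ((CoalgHom.id k H).convMul Bc).toConv_mul_toConv_antipode_comp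
  have hQQ' : Q * Q' = 1 := toConv_comp_mul_eq_one_of_map_mul_rev _ D.ract_flip_one
    D.ract_flip_mul Bc.toConv_antipode_comp_mul_toConv
  have hQ'Q : Q' * Q = 1 := toConv_comp_mul_eq_one_of_map_mul_rev _ D.ract_flip_one
    D.ract_flip_mul Bc.toConv_mul_toConv_antipode_comp
  have hr : r * (P * Q') = Q' * r := by
    ext g b
    obtain ⟨ι, s, g₁, g₂, g₃, hg⟩ := exists_comul3_eq (k := k) g
    rw [constConv_mul, mul_constConv]
    simp only [comp_apply, mulLeft_apply, mulRight_apply, Module.End.mul_apply]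
    rw [D.lactConv_idMul_mul_ractConv_apply B _ hg]
    exact hR b g ι s g₁ g₂ g₃ hg
  have hi := mul_mul_eq_of_mul_mul_inv_eq hQQ' hQ'Q hr
  have hii := mul_mul_inv_eq_of_mul_mul_eq hPP' hi
  refine ⟨fun a g ι s g₁ g₂ g₃ hg => ?_, fun a g ι s g₁ g₂ g₃ hg => ?_⟩
  · rw [← D.ractConv_mul_constConv_mul_lactConv_idMul_apply B R hg, hi, constConv_mul]
    rfl
  · rw [← D.constConv_mul_ractConv_mul_lactConv_antipode_idMul_apply B R hg, hii, mul_constConv]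
    rfl

/-- The auxiliary identities (2.3) in the proof of Theorem 2.2:  if
`R(g₁B(g₂) ▷ b ◁ S_H(B(g₃))) = R(b) ◁ S_H(B(g))`, then
`R(g₁B(g₂) ▷ a) ◁ B(g₃) = R(a ◁ B(g))` and `R(a) ◁ B(g) = R(S_H(g₁B(g₂)) ▷ a ◁ B(g₃))`. -/
theorem rotaBaxter_smash_aux
    {k A H : Type} [Field k] [Ring A] [Ring H] [HopfAlgebra k A] [HopfAlgebra k H]
    (hcA : ∀ a : A, TensorProduct.comm k A A (Coalgebra.comul (R := k) a) = Coalgebra.comul a)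
    (hcH : ∀ h : H, TensorProduct.comm k H H (Coalgebra.comul (R := k) h) = Coalgebra.comul h)
    (D : BimoduleHopfData k A H Coalgebra.comul Coalgebra.counit (HopfAlgebra.antipode k)
      Coalgebra.comul Coalgebra.counit)
    (B : H →ₗ[k] H)
    (hB : IsRotaBaxterOp Coalgebra.comul Coalgebra.counit (LinearMap.mul k H)
      (HopfAlgebra.antipode (R := k)) B)
    (R : A →ₗ[k] A)
    (hR : ∀ (b : A) (g : H) (ι : Type) (s : Finset ι) (g1 g2 g3 : ι → H),
      comul3 Coalgebra.comul g = ∑ i ∈ s, g1 i ⊗ₜ[k] (g2 i ⊗ₜ[k] g3 i) →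
      R (∑ i ∈ s,
          D.ract (D.lact (g1 i * B (g2 i)) b) (HopfAlgebra.antipode (R := k) (B (g3 i)))) =
        D.ract (R b) (HopfAlgebra.antipode (R := k) (B g))) :
    (∀ (a : A) (g : H) (ι : Type) (s : Finset ι) (g1 g2 g3 : ι → H),
      comul3 Coalgebra.comul g = ∑ i ∈ s, g1 i ⊗ₜ[k] (g2 i ⊗ₜ[k] g3 i) →
      ∑ i ∈ s, D.ract (R (D.lact (g1 i * B (g2 i)) a)) (B (g3 i)) = R (D.ract a (B g))) ∧
    (∀ (a : A) (g : H) (ι : Type) (s : Finset ι) (g1 g2 g3 : ι → H),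
      comul3 Coalgebra.comul g = ∑ i ∈ s, g1 i ⊗ₜ[k] (g2 i ⊗ₜ[k] g3 i) →
      D.ract (R a) (B g) =
        R (∑ i ∈ s,
            D.ract (D.lact (HopfAlgebra.antipode (R := k) (g1 i * B (g2 i))) a) (B (g3 i)))) :=
  rotaBaxter_smash_aux_general hcH D B hB R hR
end

section
/- Let A and H be cocommutative Hopf algebras over a field k such that A is an H-bimodule Hopf algebra, let B be a Rota-Baxter operator on H, let R : A → A be a linear map, and define B̄ : A ⋈ H → A ⋈ H by B̄(a ⋈ h) = B(h₁) ▷ R(a) ◁ B(h₂) ⋈ B(h₃). If B̄ is a coalgebra map, then R is a coalgebra map, i.e. Δ(R(a)) = R(a₁) ⊗ R(a₂) and ε(R(a)) = ε(a) for all a ∈ A. -/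
open TensorProduct

noncomputable section

variable {k : Type} [Field k]

variable {A H : Type} [Ring A] [Ring H] [Algebra k A] [Algebra k H]
  {ΔA : A →ₗ[k] A ⊗[k] A} {εA : A →ₗ[k] k} {SA : A →ₗ[k] A}
  {ΔH : H →ₗ[k] H ⊗[k] H} {εH : H →ₗ[k] k}

/-! Only the restriction of `B̄` to `A ⋈ 1` matters. Since `B` is a coalgebra map, `g := B 1` is
group-like, so `B̄(a ⋈ 1) = F(R a)` for `F(a) := g ▷ a ◁ g ⋈ g`. Both `F` and `a ↦ a ⋈ 1` are
coalgebra maps, and `F` has the left inverse `a ⋈ h ↦ ε(h) S(g) ▷ a ◁ S(g)`, so `F` can be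
cancelled from the coalgebra-map identities for `B̄`, leaving those for `R`. -/

section Intertwining

variable {R M N : Type*} [CommSemiring R] [AddCommMonoid M] [AddCommMonoid N]
  [Module R M] [Module R N]

theorem TensorProduct.map_injective_of_comp_eq_id {f : M →ₗ[R] N} {g : N →ₗ[R] M}
    (h : g ∘ₗ f = LinearMap.id) : Function.Injective (TensorProduct.map f f) :=
  Function.LeftInverse.injective (g := TensorProduct.map g g) fun x => by
    rw [← LinearMap.comp_apply, ← TensorProduct.map_comp, h, TensorProduct.map_id,
      LinearMap.id_apply]

theorem comul_comp_eq_of_comp_eq_comp {c : M →ₗ[R] M ⊗[R] M} {c' : N →ₗ[R] N ⊗[R] N}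
    {f j : M →ₗ[R] N} {r : M →ₗ[R] M} {b : N →ₗ[R] N}
    (hf : c' ∘ₗ f = TensorProduct.map f f ∘ₗ c) (hj : c' ∘ₗ j = TensorProduct.map j j ∘ₗ c)
    (hb : c' ∘ₗ b = TensorProduct.map b b ∘ₗ c') (hbj : b ∘ₗ j = f ∘ₗ r)
    (hinj : Function.Injective (TensorProduct.map f f)) :
    c ∘ₗ r = TensorProduct.map r r ∘ₗ c := by
  rw [← LinearMap.cancel_left hinj]
  calc TensorProduct.map f f ∘ₗ c ∘ₗ r
      = c' ∘ₗ b ∘ₗ j := by rw [hbj, ← LinearMap.comp_assoc, ← hf, LinearMap.comp_assoc]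
    _ = TensorProduct.map b b ∘ₗ TensorProduct.map j j ∘ₗ c := by
        rw [← LinearMap.comp_assoc, hb, LinearMap.comp_assoc, hj]
    _ = TensorProduct.map f f ∘ₗ TensorProduct.map r r ∘ₗ c := by
        rw [← LinearMap.comp_assoc, ← TensorProduct.map_comp, hbj, TensorProduct.map_comp,
          LinearMap.comp_assoc]

theorem counit_comp_eq_of_comp_eq_comp {e : M →ₗ[R] R} {e' : N →ₗ[R] R}
    {f j : M →ₗ[R] N} {r : M →ₗ[R] M} {b : N →ₗ[R] N}
    (hf : e' ∘ₗ f = e) (hj : e' ∘ₗ j = e) (hb : e' ∘ₗ b = e') (hbj : b ∘ₗ j = f ∘ₗ r) :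
    e ∘ₗ r = e :=
  calc e ∘ₗ r = e' ∘ₗ f ∘ₗ r := by rw [← LinearMap.comp_assoc, hf]
    _ = e' ∘ₗ b ∘ₗ j := by rw [hbj]
    _ = e := by rw [← LinearMap.comp_assoc, hb, hj]

end Intertwining

namespace BimoduleHopfData

variable (D : BimoduleHopfData k A H ΔA εA SA ΔH εH)

def biact (g : H) : A →ₗ[k] A :=
  D.ract.flip g ∘ₗ D.lact g

theorem biact_apply (g : H) (a : A) : D.biact g a = D.ract (D.lact g a) g := rfl

theorem biact_biact (g h : H) (a : A) :
    D.biact g (D.biact h a) = D.ract (D.lact (g * h) a) (h * g) := by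
  simp only [biact_apply, D.lact_ract, D.mul_lact, D.ract_mul]

theorem biact_comp_biact_eq_id {g g' : H} (h₁ : g' * g = 1) (h₂ : g * g' = 1) :
    D.biact g' ∘ₗ D.biact g = LinearMap.id := by
  ext a
  rw [LinearMap.comp_apply, biact_biact, h₁, h₂, D.one_lact, D.ract_one, LinearMap.id_apply]

theorem comul_comp_biact {g : H} (hg : ΔH g = g ⊗ₜ[k] g) :
    ΔA ∘ₗ D.biact g = TensorProduct.map (D.biact g) (D.biact g) ∘ₗ ΔA := by
  ext a
  obtain ⟨t, ht⟩ := TensorProduct.exists_finset (ΔA a)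
  have hg' : ΔH g = ∑ _i ∈ ({()} : Finset Unit), g ⊗ₜ[k] g := by simpa using hg
  have hlact := D.comul_lact g a Unit (A × A) {()} t _ _ Prod.fst Prod.snd hg' ht
  simp only [Finset.sum_singleton] at hlact
  have hract := D.comul_ract (D.lact g a) g (A × A) Unit t {()} _ _ _ _ hlact hg'
  simp only [Finset.sum_singleton] at hract
  simp [biact_apply, hract, ht, map_sum]

theorem counit_comp_biact {g : H} (hg : εH g = 1) : εA ∘ₗ D.biact g = εA := by
  ext a
  simp [biact_apply, D.counit_ract, D.counit_lact, hg]

end BimoduleHopfData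

theorem smashComul_comp_mk_flip {g : H} (hg : ΔH g = g ⊗ₜ[k] g) :
    smashComul ΔA ΔH ∘ₗ (TensorProduct.mk k A H).flip g =
      TensorProduct.map ((TensorProduct.mk k A H).flip g) ((TensorProduct.mk k A H).flip g) ∘ₗ
        ΔA := by
  ext a
  simp only [smashComul, LinearMap.comp_apply, LinearMap.flip_apply, TensorProduct.mk_apply,
    TensorProduct.map_tmul, hg, LinearEquiv.coe_coe]
  induction ΔA a using TensorProduct.induction_on with
  | zero => simp
  | tmul x y => simp
  | add x y hx hy => simp [TensorProduct.add_tmul, hx, hy]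

theorem smashCounit_comp_mk_flip (h : H) :
    smashCounit εA εH ∘ₗ (TensorProduct.mk k A H).flip h = εH h • εA := by
  ext a
  simp [smashCounit, mul_comm]

theorem IsBbar.comp_mk_flip_one {D : BimoduleHopfData k A H ΔA εA SA ΔH εH} {R : A →ₗ[k] A}
    {B Bb} (hBb : IsBbar D R B Bb) (h1 : ΔH 1 = 1 ⊗ₜ[k] 1) :
    Bb ∘ₗ (TensorProduct.mk k A H).flip 1 =
      ((TensorProduct.mk k A H).flip (B 1) ∘ₗ D.biact (B 1)) ∘ₗ R := by
  ext a
  have h3 : comul3 ΔH 1 = ∑ _i ∈ ({()} : Finset Unit), 1 ⊗ₜ[k] (1 ⊗ₜ[k] 1) := by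
    simp [comul3, h1]
  simpa [D.biact_apply] using hBb a 1 Unit {()} _ _ _ h3

theorem coalgebraMap_of_Bbar_coalgebraMap_general
    {k A H : Type} [Field k] [Ring A] [Ring H] [HopfAlgebra k A] [HopfAlgebra k H]
    (D : BimoduleHopfData k A H Coalgebra.comul Coalgebra.counit (HopfAlgebra.antipode (R := k))
      Coalgebra.comul Coalgebra.counit)
    (R : A →ₗ[k] A) (B : H →ₗ[k] H)
    (hB : IsRotaBaxterOp Coalgebra.comul Coalgebra.counit (LinearMap.mul k H)
      (HopfAlgebra.antipode (R := k)) B)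
    (Bb : A ⊗[k] H →ₗ[k] A ⊗[k] H) (hBb : IsBbar D R B Bb)
    (hcomul : smashComul (Coalgebra.comul (R := k) (A := A))
        (Coalgebra.comul (R := k) (A := H)) ∘ₗ Bb =
      TensorProduct.map Bb Bb ∘ₗ smashComul Coalgebra.comul Coalgebra.comul)
    (hcounit : smashCounit (Coalgebra.counit (R := k) (A := A))
        (Coalgebra.counit (R := k) (A := H)) ∘ₗ Bb =
      smashCounit Coalgebra.counit Coalgebra.counit) :
    Coalgebra.comul ∘ₗ R = TensorProduct.map R R ∘ₗ Coalgebra.comul ∧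
    Coalgebra.counit ∘ₗ R = Coalgebra.counit (R := k) := by
  let Bc : H →ₗc[k] H := { B with counit_comp := hB.2.1, map_comp_comul := hB.1.symm }
  have hg : IsGroupLikeElem k (B 1) := IsGroupLikeElem.one.map Bc
  have h1 : IsGroupLikeElem k (1 : H) := IsGroupLikeElem.one
  set ι := (TensorProduct.mk k A H).flip
  have hBb1 : Bb ∘ₗ ι 1 = (ι (B 1) ∘ₗ D.biact (B 1)) ∘ₗ R :=
    hBb.comp_mk_flip_one h1.comul_eq_tmul_self
  have hinj : Function.Injective (TensorProduct.map (ι (B 1) ∘ₗ D.biact (B 1))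
      (ι (B 1) ∘ₗ D.biact (B 1))) := by
    refine TensorProduct.map_injective_of_comp_eq_id (g := D.biact (HopfAlgebra.antipode k (B 1))
      ∘ₗ (TensorProduct.rid k A).toLinearMap ∘ₗ LinearMap.lTensor A Coalgebra.counit) ?_
    rw [← D.biact_comp_biact_eq_id hg.antipode_mul_cancel hg.mul_antipode_cancel]
    ext a
    simp [ι, hg.counit_eq_one]
  constructor
  · refine comul_comp_eq_of_comp_eq_comp ?_ (smashComul_comp_mk_flip h1.comul_eq_tmul_self)
      hcomul hBb1 hinj
    rw [← LinearMap.comp_assoc, smashComul_comp_mk_flip hg.comul_eq_tmul_self,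
      LinearMap.comp_assoc, D.comul_comp_biact hg.comul_eq_tmul_self, ← LinearMap.comp_assoc,
      TensorProduct.map_comp]
  · refine counit_comp_eq_of_comp_eq_comp ?_ 
      (by rw [smashCounit_comp_mk_flip, h1.counit_eq_one, one_smul]) hcounit hBb1
    rw [← LinearMap.comp_assoc, smashCounit_comp_mk_flip, hg.counit_eq_one, one_smul,
      D.counit_comp_biact hg.counit_eq_one]

/-- If `B̄(a ⋈ h) = B(h₁) ▷ R(a) ◁ B(h₂) ⋈ B(h₃)` is a coalgebra map on the L-R smash
product, then `R` is a coalgebra map. -/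
theorem coalgebraMap_of_Bbar_coalgebraMap
    {k A H : Type} [Field k] [Ring A] [Ring H] [HopfAlgebra k A] [HopfAlgebra k H]
    (hcA : ∀ a : A, TensorProduct.comm k A A (Coalgebra.comul (R := k) a) = Coalgebra.comul a)
    (hcH : ∀ h : H, TensorProduct.comm k H H (Coalgebra.comul (R := k) h) = Coalgebra.comul h)
    (D : BimoduleHopfData k A H Coalgebra.comul Coalgebra.counit (HopfAlgebra.antipode (R := k))
      Coalgebra.comul Coalgebra.counit)
    (R : A →ₗ[k] A) (B : H →ₗ[k] H)
    (hB : IsRotaBaxterOp Coalgebra.comul Coalgebra.counit (LinearMap.mul k H)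
      (HopfAlgebra.antipode (R := k)) B)
    (Bb : A ⊗[k] H →ₗ[k] A ⊗[k] H) (hBb : IsBbar D R B Bb)
    (hcomul : smashComul (Coalgebra.comul (R := k) (A := A))
        (Coalgebra.comul (R := k) (A := H)) ∘ₗ Bb =
      TensorProduct.map Bb Bb ∘ₗ smashComul Coalgebra.comul Coalgebra.comul)
    (hcounit : smashCounit (Coalgebra.counit (R := k) (A := A))
        (Coalgebra.counit (R := k) (A := H)) ∘ₗ Bb =
      smashCounit Coalgebra.counit Coalgebra.counit) :
    Coalgebra.comul ∘ₗ R = TensorProduct.map R R ∘ₗ Coalgebra.comul ∧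
    Coalgebra.counit ∘ₗ R = Coalgebra.counit (R := k) :=
  coalgebraMap_of_Bbar_coalgebraMap_general D R B hB Bb hBb hcomul hcounit

end
end

section
/- Let H be a commutative Hopf algebra over a field k with antipode S and counit ε, and let B : H → H be a Rota-Baxter co-operator on H. Then ε ∘ B = ε. -/
open TensorProduct

noncomputable section

/-- `B` is a Rota–Baxter co-operator w.r.t. a comultiplication `Δ` and antipode `S` on a
commutative algebra `V`:  `B` is an algebra map satisfying
`B(x₁) ⊗ B(x₂) = B(x)₁ · B(B(x)₂ · S(B(x)₄)) ⊗ B(x)₃` for all `x`. -/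
def IsRotaBaxterCoOp {k V : Type} [Field k] [CommRing V] [Module k V]
    (Δ : V →ₗ[k] V ⊗[k] V) (S : V →ₗ[k] V) (B : V →ₗ[k] V) : Prop :=
  B 1 = 1 ∧ (∀ x y : V, B (x * y) = B x * B y) ∧
  ∀ (x : V) (ι κ κ1 κ2 : Type) (s : Finset ι) (y z : ι → V)
    (t : Finset κ) (u v : κ → V)
    (t1 : κ → Finset κ1) (u1 u2 : κ → κ1 → V)
    (t2 : κ → Finset κ2) (v1 v2 : κ → κ2 → V),
    Δ x = ∑ i ∈ s, y i ⊗ₜ[k] z i →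
    Δ (B x) = ∑ j ∈ t, u j ⊗ₜ[k] v j →
    (∀ j, Δ (u j) = ∑ l ∈ t1 j, u1 j l ⊗ₜ[k] u2 j l) →
    (∀ j, Δ (v j) = ∑ m ∈ t2 j, v1 j m ⊗ₜ[k] v2 j m) →
    ∑ i ∈ s, B (y i) ⊗ₜ[k] B (z i) =
      ∑ j ∈ t, ∑ l ∈ t1 j, ∑ m ∈ t2 j,
        (u1 j l * B (u2 j l * S (v2 j m))) ⊗ₜ[k] v1 j m

/-!
The character `χ = ε ∘ B` lives in the convolution group of algebra maps `H → k`, whose unit is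
`ε` and in which `χ⁻¹ = χ ∘ S`. Applying `ε ⊗ ε` to the co-operator identity and contracting with
the counit axioms gives `(χ ⋆ χ)(x) = (χ ⋆ χ⁻¹)(B x) = ε(B x) = χ(x)`, so `χ` is an idempotent of a
group, hence `χ = ε`.
-/

open Coalgebra WithConv

lemma Coalgebra.Repr.sum_counit_mul_eq {R C ι : Type*} [CommSemiring R] [AddCommMonoid C]
    [Module R C] [Coalgebra R C] {c : C} (𝓡 : Repr R c ι) (f : C →ₗ[R] R) :
    ∑ i ∈ 𝓡.index, counit (R := R) (𝓡.left i) * f (𝓡.right i) = f c := by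
  simpa [map_sum] using congr(f $(sum_counit_smul 𝓡))

lemma Coalgebra.Repr.sum_sum_sum_counit_mul_eq_convMul {R C κ κ₁ κ₂ : Type*} [CommSemiring R]
    [AddCommMonoid C] [Module R C] [Coalgebra R C] {c : C} (𝓢 : Repr R c κ)
    (𝓢₁ : ∀ j, Repr R (𝓢.left j) κ₁) (𝓢₂ : ∀ j, Repr R (𝓢.right j) κ₂) (f g : C →ₗ[R] R) :
    ∑ j ∈ 𝓢.index, ∑ l ∈ (𝓢₁ j).index, ∑ m ∈ (𝓢₂ j).index,
      counit (R := R) ((𝓢₁ j).left l) * f ((𝓢₁ j).right l) *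
        (counit (R := R) ((𝓢₂ j).left m) * g ((𝓢₂ j).right m)) =
      (toConv f * toConv g) c := by
  simp_rw [← Finset.sum_mul_sum, sum_counit_mul_eq, 𝓢.convMul_apply]

namespace IsRotaBaxterCoOp

variable {k H : Type} [Field k] [CommRing H] [HopfAlgebra k H] {B : H →ₗ[k] H}

def toAlgHom (hB : IsRotaBaxterCoOp comul (HopfAlgebra.antipode k) B) : H →ₐ[k] H :=
  AlgHom.ofLinearMap B hB.1 hB.2.1

def counitComp (hB : IsRotaBaxterCoOp comul (HopfAlgebra.antipode k) B) : H →ₐ[k] k :=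
  (Bialgebra.counitAlgHom k H).comp hB.toAlgHom

lemma sum_tmul_eq_sum_sum_sum (hB : IsRotaBaxterCoOp comul (HopfAlgebra.antipode k) B)
    {ι κ κ₁ κ₂ : Type} (x : H) (𝓡 : Repr k x ι) (𝓢 : Repr k (B x) κ)
    (𝓢₁ : ∀ j, Repr k (𝓢.left j) κ₁) (𝓢₂ : ∀ j, Repr k (𝓢.right j) κ₂) :
    ∑ i ∈ 𝓡.index, B (𝓡.left i) ⊗ₜ[k] B (𝓡.right i) =
      ∑ j ∈ 𝓢.index, ∑ l ∈ (𝓢₁ j).index, ∑ m ∈ (𝓢₂ j).index,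
        ((𝓢₁ j).left l * B ((𝓢₁ j).right l * HopfAlgebra.antipode k ((𝓢₂ j).right m))) ⊗ₜ[k]
          (𝓢₂ j).left m :=
  hB.2.2 x ι κ κ₁ κ₂ _ _ _ _ _ _ _ _ _ _ _ _ 𝓡.eq.symm 𝓢.eq.symm (fun j => (𝓢₁ j).eq.symm)
    (fun j => (𝓢₂ j).eq.symm)

lemma isIdempotentElem_toConv_counitComp
    (hB : IsRotaBaxterCoOp comul (HopfAlgebra.antipode k) B) :
    IsIdempotentElem (toConv hB.counitComp) := by
  set χ := toConv hB.counitComp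
  have hχ : ∀ y, χ.ofConv y = counit (B y) := fun _ => rfl
  have hχinv : ∀ y, χ⁻¹.ofConv y = counit (B (HopfAlgebra.antipode k y)) := fun _ => rfl
  ext x
  have hRB := congr(LinearMap.mul' k k (TensorProduct.map (counit (R := k)) (counit (R := k))
    $(hB.sum_tmul_eq_sum_sum_sum x (ℛ k x) (ℛ k (B x)) (fun _ => ℛ k _) (fun _ => ℛ k _))))
  simp only [map_sum, TensorProduct.map_tmul, LinearMap.mul'_apply, Bialgebra.counit_mul,
    hB.2.1] at hRB
  calc (χ * χ).ofConv x = (toConv χ.ofConv.toLinearMap * toConv χ.ofConv.toLinearMap) x := rfl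
    _ = _ := (ℛ k x).convMul_apply _ _
    _ = _ := hRB
    _ = (toConv χ.ofConv.toLinearMap * toConv χ⁻¹.ofConv.toLinearMap) (B x) := by
      rw [← (ℛ k (B x)).sum_sum_sum_counit_mul_eq_convMul (fun _ => ℛ k _) (fun _ => ℛ k _)]
      refine Finset.sum_congr rfl fun j _ => Finset.sum_congr rfl fun l _ =>
        Finset.sum_congr rfl fun m _ => ?_
      simp only [AlgHom.toLinearMap_apply, hχ, hχinv]
      ring
    _ = χ.ofConv x := by
      rw [← AlgHom.toLinearMap_convMul, mul_inv_cancel]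
      rfl

end IsRotaBaxterCoOp

/-- **Proposition 3.2.**  If `B` is a Rota–Baxter co-operator on a commutative Hopf
algebra `H`, then `ε ∘ B = ε`. -/
theorem counit_comp_rotaBaxterCo
    {k H : Type} [Field k] [CommRing H] [HopfAlgebra k H]
    (B : H →ₗ[k] H)
    (hB : IsRotaBaxterCoOp Coalgebra.comul (HopfAlgebra.antipode (R := k)) B) :
    Coalgebra.counit ∘ₗ B = Coalgebra.counit (R := k) := by
  have hχ := IsIdempotentElem.iff_eq_one.mp hB.isIdempotentElem_toConv_counitComp
  ext x
  exact congr($hχ x)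

end
end
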